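/- Let 𝔽 be ℝ or ℂ, X a Banach space over 𝔽 with dim X ≥ 2, and 𝒜 a standard operator algebra in B(X). Let Φ : 𝒜 → 𝒜 be a surjective strong 3-commutativity preserving map. Then for any nontrivial idempotent P ∈ 𝒜 of rank at most 2, there exist scalars λ_P, μ_P ∈ 𝔽 such that Φ(P) = λ_P·P + μ_P·I. -/

import Mathlib

set_option synthInstance.maxHeartbeats 400000
set_option maxHeartbeats 1000000

/-- The commutator `[A,B] = AB - BA` in a ring. -/
def bracket1 {R : Type*} [Ring R] (A B : R) : R := A * B - B * A

/-- The 3-commutator `[A,B]₃ = [[[A,B],B],B]` in a ring. -/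
def bracket3 {R : Type*} [Ring R] (A B : R) : R := bracket1 (bracket1 (bracket1 A B) B) B

/-- A standard operator algebra on a normed space `X` over `𝕜` is a subalgebra of
`B(X)` (automatically containing the identity) containing all finite-rank operators. -/
def IsStandardOperatorAlgebra (𝕜 : Type*) [RCLike 𝕜] (X : Type*)
    [NormedAddCommGroup X] [NormedSpace 𝕜 X]
    (𝒜 : Subalgebra 𝕜 (X →L[𝕜] X)) : Prop :=
  ∀ T : X →L[𝕜] X, FiniteDimensional 𝕜 (LinearMap.range (T : X →ₗ[𝕜] X)) → T ∈ 𝒜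


/-!
Write `Q = Φ P`. For rank-one `A`, surjectivity gives `[A, Q]₃ = [A', P]₃ = A'P - PA'`, whose
diagonal blocks with respect to `P` vanish. Read at `y` and tested against `f`, `P [x ⊗ f, Q]₃ P = 0`
says `P φ(Q) = 0` for the cubic `φ(t) = f ((Q - t)³ P y)`; the first linear dependence among
`P, PQ, PQ², PQ³` then yields `λ` with `(Q - λ)³ P = 0` plus a finer vanishing condition, and
likewise `μ` for `1 - P`. If `λ = μ`, `Q - λ` squares to zero, so `[A, P] = [Φ A, Q]₃ = 0` for all
rank-one `A`, impossible for a nontrivial idempotent. Otherwise `P` is a polynomial in `Q` (Bézout),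
so `Q = λ P + μ (1 - P) + N` with `N` commuting with `P` and square-zero on both corners. The same
analysis for `B = Φ⁻¹ e`, `e` a rank-one idempotent commuting with `P`, gives
`[Q, e] = [P, B]₃ = 0`; commuting with all such `e` forces `N = 0`.
-/

section Ring

variable {R : Type*} [Ring R]

theorem bracket3_eq_of_isIdempotentElem (A : R) {E : R} (hE : IsIdempotentElem E) :
    bracket3 A E = A * E - E * A := by
  have hE' : ∀ x : R, E * (E * x) = E * x := fun x => by rw [← mul_assoc, hE.eq]
  simp only [bracket3, bracket1, sub_mul, mul_sub, mul_assoc, hE', hE.eq]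
  abel

theorem bracket3_eq_zero_of_mul_self_eq_zero (A : R) {N : R} (hN : N * N = 0) :
    bracket3 A N = 0 := by
  have hN' : ∀ x : R, N * (N * x) = 0 := fun x => by rw [← mul_assoc, hN, zero_mul]
  simp only [bracket3, bracket1, sub_mul, mul_sub, mul_assoc, hN', hN, mul_zero, sub_zero,
    zero_sub, neg_mul, mul_neg, neg_zero]

theorem bracket3_one_sub (A : R) {E : R} (hE : IsIdempotentElem E) :
    bracket3 A (1 - E) = bracket3 (-A) E := by
  rw [bracket3_eq_of_isIdempotentElem _ hE.one_sub, bracket3_eq_of_isIdempotentElem _ hE]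
  noncomm_ring

theorem IsIdempotentElem.mul_bracket3_mul_self {E : R} (hE : IsIdempotentElem E) (A : R) :
    E * bracket3 A E * E = 0 := by
  have hE' : ∀ x : R, E * (E * x) = E * x := fun x => by rw [← mul_assoc, hE.eq]
  simp only [bracket3_eq_of_isIdempotentElem A hE, mul_sub, sub_mul, mul_assoc, hE', hE.eq,
    sub_self]

theorem bracket3_add_of_commute {A M C : R} (hA : Commute A C) (hM : Commute M C) :
    bracket3 A (M + C) = bracket3 A M := by
  have key : ∀ Z : R, Commute Z C →
      bracket1 Z (M + C) = bracket1 Z M ∧ Commute (bracket1 Z M) C := fun Z hZ =>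
    ⟨by simp only [bracket1, mul_add, add_mul, hZ.eq]; abel,
      (hZ.mul_left hM).sub_left (hM.mul_left hZ)⟩
  obtain ⟨h1, c1⟩ := key A hA
  obtain ⟨h2, c2⟩ := key _ c1
  obtain ⟨h3, -⟩ := key _ c2
  rw [bracket3, h1, h2, h3, bracket3]

theorem map_bracket3 {F R S : Type*} [Ring R] [Ring S] [FunLike F R S] [RingHomClass F R S]
    (φ : F) (A B : R) : φ (bracket3 A B) = bracket3 (φ A) (φ B) := by
  simp only [bracket3, bracket1, map_sub, map_mul]

end Ring

section Algebra

variable {K R : Type*} [CommRing K] [Ring R] [Algebra K R]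

theorem bracket3_sub_smul_one (A B : R) (c : K) : bracket3 A (B - c • 1) = bracket3 A B := by
  rw [sub_eq_add_neg, ← neg_smul]
  exact bracket3_add_of_commute ((Commute.one_right A).smul_right _)
    ((Commute.one_right B).smul_right _)

theorem Commute.sub_smul_one_left {a b : R} (h : Commute a b) (c : K) : Commute (a - c • 1) b :=
  h.sub_left ((Commute.one_left b).smul_left c)

theorem bracket3_eq_zero_of_commute_of_isIdempotentElem {A B e : R} (he : IsIdempotentElem e)
    (hAe : Commute A e) (hBe : Commute B e)
    {l m : K} (hl : (B - l • 1) * e = 0) (hm : (B - m • 1) * (B - m • 1) * (1 - e) = 0) :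
    bracket3 A B = 0 := by
  set T := B - m • 1
  have hTe : Commute T e := hBe.sub_smul_one_left m
  have hTe' : T * e = (l - m) • e := by
    rw [show T = (B - l • 1) + (l - m) • 1 by module, add_mul, hl, zero_add, smul_mul_assoc,
      one_mul]
  -- `T = M + (l - m) e` with `M = T (1 - e)` square-zero and commuting with `e`
  have hdecomp : T = T * (1 - e) + (l - m) • e := by rw [← hTe', ← mul_add, sub_add_cancel, mul_one]
  have hM : T * (1 - e) * (T * (1 - e)) = 0 := by
    rw [((Commute.one_right T).sub_right hTe).symm.mul_mul_mul_comm, he.one_sub.eq, hm]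
  have hMe : Commute (T * (1 - e)) e := hTe.mul_left ((Commute.one_left e).sub_left (.refl e))
  rw [← bracket3_sub_smul_one A B m]
  change bracket3 A T = 0
  rw [hdecomp, bracket3_add_of_commute (hAe.smul_right _) (hMe.smul_right _),
    bracket3_eq_zero_of_mul_self_eq_zero _ hM]

end Algebra

section Field

variable {K R : Type*} [Field K] [Ring R] [Algebra K R]

open Polynomial in
theorem commute_of_pow_sub_smul_one_mul_eq_zero {a E : R} {l m : K} (hlm : l ≠ m) {n : ℕ}
    (hl : (a - l • 1) ^ n * E = 0) (hm : (a - m • 1) ^ n * (1 - E) = 0) : Commute a E := by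
  obtain ⟨u, v, huv⟩ : IsCoprime ((X - C l) ^ n) ((X - C m) ^ n) :=
    (isCoprime_X_sub_C_of_isUnit_sub (sub_ne_zero_of_ne hlm).isUnit).pow
  have hbez := congrArg (aeval a) huv
  simp only [map_add, map_mul, map_pow, map_sub, aeval_X, aeval_C,
    Algebra.algebraMap_eq_smul_one, map_one] at hbez
  have hm' : (a - m • 1) ^ n * E = (a - m • 1) ^ n := by
    rwa [mul_sub, mul_one, sub_eq_zero, eq_comm] at hm
  have hE : E = aeval a v * (a - m • 1) ^ n :=
    calc E = (aeval a u * (a - l • 1) ^ n + aeval a v * (a - m • 1) ^ n) * E := by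
          rw [hbez, one_mul]
      _ = aeval a v * (a - m • 1) ^ n := by
          rw [add_mul, mul_assoc, hl, mul_zero, zero_add, mul_assoc, hm']
  have hav : Commute a (aeval a v) := by simpa using (Commute.all X v).map (aeval (R := K) a)
  rw [hE]
  exact hav.mul_right (((Commute.refl a).sub_smul_one_left m).symm.pow_right n)

end Field

section CornerShape

variable {R : Type*} [Ring R]

/-- How `T = S - λ` sits relative to an idempotent `E` when `E [A, S]₃ E = 0` for all
rank-one `A`. -/
def CornerShape (E T : R) : Prop :=
  T * T * T * E = 0 ∧ (T * E = 0 ∨ (T * T * E = 0 ∧ E * T * T = 0) ∨ E * T = 0)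

theorem CornerShape.two_products_eq_zero {E T : R} (h : CornerShape E T) :
    (T * E * T = 0 ∧ T * T * E = 0) ∨ (T * T * E = 0 ∧ E * T * T = 0) ∨
      (T * E * T = 0 ∧ E * T * T = 0) := by
  rcases h.2 with h | h | h
  · exact .inl ⟨by rw [h, zero_mul], by rw [mul_assoc, h, mul_zero]⟩
  · exact .inr (.inl h)
  · exact .inr (.inr ⟨by rw [mul_assoc, h, mul_zero], by rw [h, zero_mul]⟩)

theorem CornerShape.mul_self_eq_zero {E F T : R} (hE : CornerShape E T) (hF : CornerShape F T)
    (hEF : E + F = 1) : T * T = 0 := by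
  have c1 : T * E * T = 0 → T * F * T = 0 → T * T = 0 := fun h h' =>
    calc T * T = T * (E + F) * T := by rw [hEF, mul_one]
      _ = 0 := by rw [mul_add, add_mul, h, h', add_zero]
  have c2 : T * T * E = 0 → T * T * F = 0 → T * T = 0 := fun h h' =>
    calc T * T = T * T * (E + F) := by rw [hEF, mul_one]
      _ = 0 := by rw [mul_add, h, h', add_zero]
  have c3 : E * T * T = 0 → F * T * T = 0 → T * T = 0 := fun h h' =>
    calc T * T = (E + F) * T * T := by rw [hEF, one_mul]
      _ = 0 := by rw [add_mul, add_mul, h, h', add_zero]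
  -- each shape kills two of the three products, so one product vanishes for both `E` and `F`
  rcases hE.two_products_eq_zero with ⟨_, _⟩ | ⟨_, _⟩ | ⟨_, _⟩ <;>
  rcases hF.two_products_eq_zero with ⟨_, _⟩ | ⟨_, _⟩ | ⟨_, _⟩ <;>
  first
  | exact c1 ‹_› ‹_›
  | exact c2 ‹_› ‹_›
  | exact c3 ‹_› ‹_›

theorem CornerShape.mul_mul_eq_zero {E T : R} (h : CornerShape E T) (hc : Commute T E) :
    T * T * E = 0 := by
  rcases h.2 with h | h | h
  · rw [mul_assoc, h, mul_zero]
  · exact h.1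
  · rw [mul_assoc, hc.eq, h, mul_zero]

end CornerShape

namespace ContinuousLinearMap

variable {𝕜 X : Type*} [RCLike 𝕜] [NormedAddCommGroup X] [NormedSpace 𝕜 X]

theorem mul_smulRight (T : X →L[𝕜] X) (f : StrongDual 𝕜 X) (x : X) :
    T * f.smulRight x = f.smulRight (T x) := by
  ext y; simp

theorem smulRight_mul (f : StrongDual 𝕜 X) (x : X) (T : X →L[𝕜] X) :
    f.smulRight x * T = (f.comp T).smulRight x := by
  ext y; simp

theorem smulRight_mul_mul_smulRight (f : StrongDual 𝕜 X) (x : X) (T : X →L[𝕜] X) :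
    f.smulRight x * T * f.smulRight x = f (T x) • f.smulRight x := by
  ext y; simp [smul_smul, mul_comm]

theorem isIdempotentElem_smulRight {f : StrongDual 𝕜 X} {x : X} (hfx : f x = 1) :
    IsIdempotentElem (f.smulRight x) := by
  rw [IsIdempotentElem, mul_smulRight, smulRight_apply, hfx, one_smul]

theorem smulRight_ne_zero {f : StrongDual 𝕜 X} {x : X} (hfx : f x = 1) : f.smulRight x ≠ 0 := by
  intro h
  have := congrArg (fun T : X →L[𝕜] X => f (T x)) h
  simp [hfx] at this

theorem smulRight_ne_one (hdim : 2 ≤ Module.rank 𝕜 X) (f : StrongDual 𝕜 X) (x : X) :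
    f.smulRight x ≠ 1 := by
  intro h
  have : Module.rank 𝕜 X ≤ 1 :=
    rank_le_one_iff.mpr ⟨x, fun w => ⟨f w, by simpa using congrArg (fun T => T w) h⟩⟩
  exact absurd (hdim.trans this) (by norm_num)

theorem eq_zero_of_forall_dual_apply_eq_zero {T : X →L[𝕜] X}
    (h : ∀ (f : StrongDual 𝕜 X) y, f (T y) = 0) : T = 0 := by
  ext y
  exact SeparatingDual.eq_zero_of_forall_dual_eq_zero fun f => h f y

theorem eq_zero_of_mul_self_eq_zero_of_smulRight_mul {f : StrongDual 𝕜 X} {x : X}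
    (hfx : f x = 1) {N : X →L[𝕜] X} (hN : N * N = 0) (hl : f.smulRight x * N = N)
    (hr : N * f.smulRight x = N) : N = 0 := by
  have hNe : N = f (N x) • f.smulRight x := by
    conv_lhs => rw [← hr, ← hl]
    exact smulRight_mul_mul_smulRight f x N
  rw [hNe, smul_mul_smul_comm, (isIdempotentElem_smulRight hfx).eq, smul_eq_zero] at hN
  rw [hNe, mul_self_eq_zero.mp (hN.resolve_right (smulRight_ne_zero hfx)), zero_smul]

theorem mul_eq_zero_of_forall_commute_smulRight {E R : X →L[𝕜] X} (hE : IsIdempotentElem E)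
    (hRE : Commute R E) (hR : R * R * E = 0)
    (h : ∀ (f : StrongDual 𝕜 X) (x : X), f x = 1 → Commute E (f.smulRight x) →
      Commute R (f.smulRight x)) : R * E = 0 := by
  -- `e = (f₀ ∘ E) ⊗ v` with `v = R E y` commutes with `E`, but `[R, e] (E y) = -v`
  by_contra hne
  obtain ⟨y, hy⟩ : ∃ y, R (E y) ≠ 0 := by
    by_contra! h0
    exact hne (ext h0)
  set v := R (E y) with hv
  have hEv : E v = v := by
    have : E * (R * E) = R * E := by rw [← mul_assoc, ← hRE.eq, mul_assoc, hE.eq]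
    exact congrArg (· y) this
  have hRv : R v = 0 := congrArg (· y) hR
  obtain ⟨f₀, hf₀⟩ := SeparatingDual.exists_eq_one (R := 𝕜) hy
  set f := f₀.comp E
  have hfv : f v = 1 := by simp [f, hEv, hf₀]
  have hfE : f.comp E = f := by ext z; simp [f, ← mul_apply_eq_comp, hE.eq]
  have hcomm := h f v hfv (by rw [Commute, SemiconjBy, mul_smulRight, smulRight_mul, hEv, hfE])
  have := congrArg (fun T => T (E y)) hcomm.eq
  simp only [mul_apply_eq_comp, smulRight_apply, map_smul, hRv, smul_zero, ← hv, hfv,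
    one_smul] at this
  exact hy this.symm

theorem _root_.IsIdempotentElem.eq_one_of_forall_commute_smulRight {E : X →L[𝕜] X}
    (hE : IsIdempotentElem E) (hE0 : E ≠ 0)
    (h : ∀ (x : X) (f : StrongDual 𝕜 X), Commute (f.smulRight x) E) : E = 1 := by
  obtain ⟨y, hy⟩ : ∃ y, E y ≠ 0 := by
    by_contra! hE0'
    exact hE0 (ext hE0')
  obtain ⟨f, hf⟩ := SeparatingDual.exists_eq_one (R := 𝕜) fun h : y = 0 => hy (by simp [h])
  have hscalar : ∀ x, E x = f (E y) • x := fun x => by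
    simpa [hf] using (congrArg (fun T => T y) (h x f)).symm
  have hc : f (E y) = 1 := by
    have := hscalar (E y)
    rw [← mul_apply_eq_comp, hE.eq] at this
    exact smul_left_injective 𝕜 hy (this.symm.trans (one_smul 𝕜 (E y)).symm)
  ext x
  simp [hscalar x, hc]

theorem _root_.IsStandardOperatorAlgebra.smulRight_mem {𝒜 : Subalgebra 𝕜 (X →L[𝕜] X)}
    (h𝒜 : IsStandardOperatorAlgebra 𝕜 X 𝒜) (f : StrongDual 𝕜 X) (x : X) : f.smulRight x ∈ 𝒜 := by
  apply h𝒜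
  have : LinearMap.range (f.smulRight x : X →ₗ[𝕜] X) ≤ Submodule.span 𝕜 {x} := by
    rintro _ ⟨y, rfl⟩
    exact Submodule.smul_mem _ _ (Submodule.mem_span_singleton_self x)
  exact Submodule.finiteDimensional_of_le this

end ContinuousLinearMap

section Bracket3Covered

open ContinuousLinearMap

variable {𝕜 X : Type*} [RCLike 𝕜] [NormedAddCommGroup X] [NormedSpace 𝕜 X]

/-- Holds for `(B, Φ B)` and `(Φ B, B)` when `Φ` is a surjective 3-commutativity preserver. -/
def Bracket3Covered (S E : X →L[𝕜] X) : Prop :=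
  ∀ (x : X) (f : StrongDual 𝕜 X), ∃ A : X →L[𝕜] X, bracket3 (f.smulRight x) S = bracket3 A E

variable {P Q : X →L[𝕜] X}

theorem Bracket3Covered.sub_smul_one (h : Bracket3Covered Q P) (c : 𝕜) :
    Bracket3Covered (Q - c • 1) P := by
  simpa only [Bracket3Covered, bracket3_sub_smul_one] using h

theorem Bracket3Covered.one_sub (h : Bracket3Covered Q P) (hP : IsIdempotentElem P) :
    Bracket3Covered Q (1 - P) := fun x f => by
  obtain ⟨A, hA⟩ := h x f
  exact ⟨-A, by rw [hA, bracket3_one_sub _ hP, neg_neg]⟩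

theorem Bracket3Covered.corner_relation (hP : IsIdempotentElem P) (h : Bracket3Covered Q P)
    (f : StrongDual 𝕜 X) (y : X) :
    f (Q (Q (Q (P y)))) • P - (3 * f (Q (Q (P y)))) • (P * Q) + (3 * f (Q (P y))) • (P * Q * Q)
      - f (P y) • (P * Q * Q * Q) = 0 := by
  -- this is `P [f.smulRight x, Q]₃ P y = 0` for all `x`, i.e. `P φ(Q) = 0` for
  -- `φ(t) = f ((Q - t)³ P y)`
  ext x
  obtain ⟨A, hA⟩ := h x f
  have hcorner := congrArg (fun T => T y) (hP.mul_bracket3_mul_self A)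
  rw [← hA] at hcorner
  simp only [bracket3, bracket1, mul_apply_eq_comp, sub_apply, zero_apply, smulRight_apply,
    map_sub, map_smul] at hcorner
  simp only [sub_apply, add_apply, smul_apply, mul_apply_eq_comp, zero_apply]
  linear_combination (norm := module) hcorner

theorem Bracket3Covered.mul_mul_mul_eq_zero_of_mul_eq_zero (hP : IsIdempotentElem P)
    (hP0 : P ≠ 0) (h : Bracket3Covered Q P) (hPQ : P * Q = 0) : Q * Q * Q * P = 0 := by
  refine eq_zero_of_forall_dual_apply_eq_zero fun f y => ?_
  have key := h.corner_relation hP f y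
  simp only [hPQ, zero_mul, smul_zero, sub_zero, add_zero] at key
  simpa using (smul_eq_zero.mp key).resolve_right hP0

theorem Bracket3Covered.cornerShape_of_mul_mul_eq_smul (hP : IsIdempotentElem P)
    (h : Bracket3Covered Q P) (hind : LinearIndependent 𝕜 ![P * Q, P]) {β : 𝕜}
    (hPQQ : P * Q * Q = β • P) : CornerShape P Q := by
  have hPQQQ : P * Q * Q * Q = β • (P * Q) := by rw [hPQQ, smul_mul_assoc]
  have hcoef : ∀ (f : StrongDual 𝕜 X) y, f (Q (Q (Q (P y)))) + 3 * β * f (Q (P y)) = 0 ∧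
      3 * f (Q (Q (P y))) + β * f (P y) = 0 := fun f y => by
    have key := h.corner_relation hP f y
    rw [hPQQQ, hPQQ] at key
    have := LinearIndependent.pair_iff.mp hind (-(3 * f (Q (Q (P y)))) - β * f (P y))
      (f (Q (Q (Q (P y)))) + 3 * β * f (Q (P y))) (by linear_combination (norm := module) key)
    exact ⟨this.2, by linear_combination -this.1⟩
  have h1 : Q * Q * Q * P + (3 * β) • (Q * P) = 0 :=
    eq_zero_of_forall_dual_apply_eq_zero fun f y => by simpa [mul_assoc] using (hcoef f y).1
  have h2 : (3 : 𝕜) • (Q * Q * P) + β • P = 0 :=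
    eq_zero_of_forall_dual_apply_eq_zero fun f y => by simpa [mul_assoc] using (hcoef f y).2
  have h2' : (3 : 𝕜) • (Q * Q * Q * P) + β • (Q * P) = 0 := by
    simpa [mul_add, mul_smul_comm, mul_assoc] using congrArg (Q * ·) h2
  have h8 : (8 * β) • (Q * P) = 0 := by linear_combination (norm := module) 3 • h1 - h2'
  rcases smul_eq_zero.mp h8 with hβ | hQP
  · have hβ0 : β = 0 := by linear_combination hβ / 8
    have hQQP : Q * Q * P = 0 := by simpa [hβ0] using h2
    exact ⟨by rw [show Q * Q * Q * P = Q * (Q * Q * P) by simp only [mul_assoc], hQQP, mul_zero],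
      .inr (.inl ⟨hQQP, by rw [hPQQ, hβ0, zero_smul]⟩)⟩
  · exact ⟨by rw [mul_assoc, mul_assoc, hQP, mul_zero, mul_zero], .inl hQP⟩

theorem Bracket3Covered.exists_sub_smul_one_mul_eq_zero (hP : IsIdempotentElem P)
    (h : Bracket3Covered Q P) (hind : LinearIndependent 𝕜 ![P * Q * Q, P * Q, P]) :
    ∃ l : 𝕜, (Q - l • 1) * P = 0 := by
  obtain ⟨y₀, hy₀⟩ : ∃ y, P y ≠ 0 := by
    by_contra! hP0
    exact hind.ne_zero 2 (ContinuousLinearMap.ext hP0)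
  obtain ⟨f₀, hf₀⟩ := SeparatingDual.exists_eq_one (R := 𝕜) hy₀
  -- as `f₀ (P y₀) = 1`, the relation at `(f₀, y₀)` solves for `P Q³`
  have hPQQQ : P * Q * Q * Q = f₀ (Q (Q (Q (P y₀)))) • P - (3 * f₀ (Q (Q (P y₀)))) • (P * Q)
      + (3 * f₀ (Q (P y₀))) • (P * Q * Q) := by
    have key := h.corner_relation hP f₀ y₀
    rw [hf₀, one_smul] at key
    linear_combination (norm := module) -key
  refine ⟨f₀ (Q (P y₀)), eq_zero_of_forall_dual_apply_eq_zero fun f y => ?_⟩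
  have key := h.corner_relation hP f y
  rw [hPQQQ] at key
  have hcoef : 3 * f (Q (P y)) - 3 * f (P y) * f₀ (Q (P y₀)) = 0 :=
    Fintype.linearIndependent_iff.mp hind
    ![3 * f (Q (P y)) - 3 * f (P y) * f₀ (Q (P y₀)),
      -(3 * f (Q (Q (P y)))) + 3 * f (P y) * f₀ (Q (Q (P y₀))),
      f (Q (Q (Q (P y)))) - f (P y) * f₀ (Q (Q (Q (P y₀))))]
    (by simp only [Fin.sum_univ_three, Matrix.cons_val]; linear_combination (norm := module) key) 0
  simp only [mul_apply_eq_comp, sub_apply, smul_apply, one_apply_eq_self, map_sub, map_smul,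
    smul_eq_mul]
  linear_combination hcoef / 3

theorem Bracket3Covered.exists_cornerShape (hP : IsIdempotentElem P) (hP0 : P ≠ 0)
    (h : Bracket3Covered Q P) : ∃ l : 𝕜, CornerShape P (Q - l • 1) := by
  by_cases hpair : LinearIndependent 𝕜 ![P * Q, P]
  · by_cases htriple : LinearIndependent 𝕜 ![P * Q * Q, P * Q, P]
    · obtain ⟨l, hl⟩ := h.exists_sub_smul_one_mul_eq_zero hP htriple
      exact ⟨l, by rw [mul_assoc, hl, mul_zero], .inl hl⟩
    obtain ⟨a, b, hab⟩ : ∃ a b : 𝕜, a • P + b • (P * Q) = P * Q * Q := by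
      have : P * Q * Q ∈ Submodule.span 𝕜 (Set.range ![P * Q, P]) := by
        by_contra hnot
        exact htriple (linearIndependent_finCons.mpr ⟨hpair, hnot⟩)
      simpa [Matrix.range_cons, Submodule.mem_span_pair] using this
    -- completing the square: after the shift by `b / 2`, `P R²` has no `P R` component
    refine ⟨b / 2, (h.sub_smul_one _).cornerShape_of_mul_mul_eq_smul hP ?_ (β := a + b ^ 2 / 4) ?_⟩
    · rw [show P * (Q - (b / 2) • 1) = P * Q + (-(b / 2)) • P by
        rw [mul_sub, mul_smul_comm, mul_one, neg_smul, sub_eq_add_neg]]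
      exact (LinearIndependent.pair_add_smul_left_iff _).mpr hpair
    · simp only [mul_sub, sub_mul, mul_smul_comm, smul_mul_assoc, mul_one, ← hab]
      module
  · obtain ⟨δ, hδ⟩ : ∃ δ : 𝕜, δ • P = P * Q := by
      simpa [linearIndependent_fin2, hP0] using hpair
    have hPR : P * (Q - δ • 1) = 0 := by rw [mul_sub, mul_smul_comm, mul_one, hδ, sub_self]
    exact ⟨δ, (h.sub_smul_one δ).mul_mul_mul_eq_zero_of_mul_eq_zero hP hP0 hPR, .inr (.inr hPR)⟩

variable {E S : X →L[𝕜] X}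

theorem Bracket3Covered.commute_and_exists_corner_nilpotent (hE : IsIdempotentElem E) (hE0 : E ≠ 0)
    (hE1 : E ≠ 1) (hSE : Bracket3Covered S E) (hES : Bracket3Covered E S) :
    Commute S E ∧ ∃ l m : 𝕜,
      (S - l • 1) * (S - l • 1) * E = 0 ∧ (S - m • 1) * (S - m • 1) * (1 - E) = 0 := by
  obtain ⟨l, hl⟩ := hSE.exists_cornerShape hE hE0
  obtain ⟨m, hm⟩ := (hSE.one_sub hE).exists_cornerShape hE.one_sub (sub_ne_zero.mpr hE1.symm)
  have hcomm : Commute S E := by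
    by_cases hlm : l = m
    · -- `S - l` squares to zero, so every `[A, S]₃` vanishes and `E` commutes with all rank-ones
      subst hlm
      have hsq := hl.mul_self_eq_zero hm (add_sub_cancel E 1)
      refine absurd (hE.eq_one_of_forall_commute_smulRight hE0 fun x f => ?_) hE1
      obtain ⟨A, hA⟩ := hES x f
      rwa [← bracket3_sub_smul_one A S l, bracket3_eq_zero_of_mul_self_eq_zero _ hsq,
        bracket3_eq_of_isIdempotentElem _ hE, sub_eq_zero] at hA
    · exact commute_of_pow_sub_smul_one_mul_eq_zero hlm (n := 3)
        (by rw [pow_three', hl.1]) (by rw [pow_three', hm.1])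
  exact ⟨hcomm, l, m, hl.mul_mul_eq_zero (hcomm.sub_smul_one_left l),
    hm.mul_mul_eq_zero ((Commute.one_right _).sub_right (hcomm.sub_smul_one_left m))⟩

end Bracket3Covered

section Preserver

open ContinuousLinearMap

variable {𝕜 X : Type*} [RCLike 𝕜] [NormedAddCommGroup X] [NormedSpace 𝕜 X]
  {𝒜 : Subalgebra 𝕜 (X →L[𝕜] X)} {Φ : 𝒜 → 𝒜}

theorem Subalgebra.coe_bracket3 (A B : 𝒜) :
    ((bracket3 A B : 𝒜) : X →L[𝕜] X) = bracket3 (A : X →L[𝕜] X) B :=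
  map_bracket3 𝒜.val A B

theorem bracket3Covered_coe_map (h𝒜 : IsStandardOperatorAlgebra 𝕜 X 𝒜)
    (hpres : ∀ A B : 𝒜, bracket3 (Φ A) (Φ B) = bracket3 A B) (B : 𝒜) :
    Bracket3Covered (B : X →L[𝕜] X) (Φ B) := fun x f =>
  ⟨Φ ⟨f.smulRight x, h𝒜.smulRight_mem f x⟩, by
    rw [← Subalgebra.coe_bracket3, hpres, Subalgebra.coe_bracket3]⟩

theorem bracket3Covered_map_coe (h𝒜 : IsStandardOperatorAlgebra 𝕜 X 𝒜)
    (hsurj : Function.Surjective Φ) (hpres : ∀ A B : 𝒜, bracket3 (Φ A) (Φ B) = bracket3 A B)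
    (B : 𝒜) : Bracket3Covered (Φ B : X →L[𝕜] X) B := fun x f => by
  obtain ⟨A, hA⟩ := hsurj ⟨f.smulRight x, h𝒜.smulRight_mem f x⟩
  refine ⟨A, ?_⟩
  rw [← Subalgebra.coe_bracket3, ← hpres, hA, Subalgebra.coe_bracket3]

theorem commute_map_smulRight_of_commute (hdim : 2 ≤ Module.rank 𝕜 X)
    (h𝒜 : IsStandardOperatorAlgebra 𝕜 X 𝒜) (hsurj : Function.Surjective Φ)
    (hpres : ∀ A B : 𝒜, bracket3 (Φ A) (Φ B) = bracket3 A B) (P : 𝒜) {f : StrongDual 𝕜 X}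
    {x : X} (hfx : f x = 1) (hPe : Commute (P : X →L[𝕜] X) (f.smulRight x)) :
    Commute (Φ P : X →L[𝕜] X) (f.smulRight x) := by
  obtain ⟨B, hB⟩ := hsurj ⟨f.smulRight x, h𝒜.smulRight_mem f x⟩
  have hBe : ((Φ B : 𝒜) : X →L[𝕜] X) = f.smulRight x := by rw [hB]
  have he := isIdempotentElem_smulRight hfx
  have hcov₁ := bracket3Covered_coe_map h𝒜 hpres B
  have hcov₂ := bracket3Covered_map_coe h𝒜 hsurj hpres B
  rw [hBe] at hcov₁ hcov₂
  obtain ⟨hcomm, l, m, hl, hm⟩ := hcov₁.commute_and_exists_corner_nilpotent he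
    (smulRight_ne_zero hfx) (smulRight_ne_one hdim f x) hcov₂
  have hc := hcomm.sub_smul_one_left l
  have hl' : ((B : X →L[𝕜] X) - l • 1) * f.smulRight x = 0 := by
    refine eq_zero_of_mul_self_eq_zero_of_smulRight_mul hfx ?_ ?_ ?_
    · rw [hc.symm.mul_mul_mul_comm, he.eq, hl]
    · rw [← mul_assoc, ← hc.eq, mul_assoc, he.eq]
    · rw [mul_assoc, he.eq]
  have hPB := bracket3_eq_zero_of_commute_of_isIdempotentElem he hPe hcomm hl' hm
  have := congrArg Subtype.val (hpres P B)
  rwa [Subalgebra.coe_bracket3, Subalgebra.coe_bracket3, hBe, hPB,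
    bracket3_eq_of_isIdempotentElem _ he, sub_eq_zero] at this

end Preserver

theorem stmt_14_general {𝕜 X : Type*} [RCLike 𝕜] [NormedAddCommGroup X] [NormedSpace 𝕜 X]
    (hdim : 2 ≤ Module.rank 𝕜 X)
    (𝒜 : Subalgebra 𝕜 (X →L[𝕜] X)) (h𝒜 : IsStandardOperatorAlgebra 𝕜 X 𝒜)
    (Φ : 𝒜 → 𝒜) (hsurj : Function.Surjective Φ)
    (hpres : ∀ A B : 𝒜, bracket3 (Φ A) (Φ B) = bracket3 A B)
    (P : 𝒜) (hP : P * P = P) (hP0 : P ≠ 0) (hP1 : P ≠ 1) :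
    ∃ lP muP : 𝕜, Φ P = lP • P + muP • (1 : 𝒜) := by
  set E : X →L[𝕜] X := (P : X →L[𝕜] X)
  set Q : X →L[𝕜] X := (Φ P : X →L[𝕜] X)
  have hE : IsIdempotentElem E := congrArg Subtype.val hP
  obtain ⟨hQE, l, m, hl, hm⟩ :=
    (bracket3Covered_map_coe h𝒜 hsurj hpres P).commute_and_exists_corner_nilpotent hE
      (fun h => hP0 (Subtype.ext h)) (fun h => hP1 (Subtype.ext h))
      (bracket3Covered_coe_map h𝒜 hpres P)
  have hQe : ∀ (c : 𝕜) (f : StrongDual 𝕜 X) (x : X), f x = 1 → Commute E (f.smulRight x) →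
      Commute (Q - c • 1) (f.smulRight x) := fun c f x hfx he =>
    (commute_map_smulRight_of_commute hdim h𝒜 hsurj hpres P hfx he).sub_smul_one_left c
  have hl' := ContinuousLinearMap.mul_eq_zero_of_forall_commute_smulRight hE
    (hQE.sub_smul_one_left l) hl (hQe l)
  have hm' := ContinuousLinearMap.mul_eq_zero_of_forall_commute_smulRight hE.one_sub
    ((Commute.one_right Q).sub_right hQE |>.sub_smul_one_left m) hm
    fun f x hfx he => hQe m f x hfx (by simpa using (Commute.one_left _).sub_left he)
  refine ⟨l - m, m, Subtype.ext ?_⟩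
  calc Q = (Q - l • 1) * E + (Q - m • 1) * (1 - E) + ((l - m) • E + m • 1) := by
        simp only [sub_mul, mul_sub, smul_mul_assoc, one_mul, mul_one]
        module
    _ = _ := by rw [hl', hm', zero_add, zero_add]; rfl

theorem stmt_14 {𝕜 X : Type*} [RCLike 𝕜] [NormedAddCommGroup X] [NormedSpace 𝕜 X]
    [CompleteSpace X] (hdim : 2 ≤ Module.rank 𝕜 X)
    (𝒜 : Subalgebra 𝕜 (X →L[𝕜] X)) (h𝒜 : IsStandardOperatorAlgebra 𝕜 X 𝒜)
    (Φ : 𝒜 → 𝒜) (hsurj : Function.Surjective Φ)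
    (hpres : ∀ A B : 𝒜, bracket3 (Φ A) (Φ B) = bracket3 A B)
    (P : 𝒜) (hP : P * P = P) (hP0 : P ≠ 0) (hP1 : P ≠ 1)
    (hrank : Module.rank 𝕜 (LinearMap.range ((P : X →L[𝕜] X) : X →ₗ[𝕜] X)) ≤ 2) :
    ∃ lP muP : 𝕜, Φ P = lP • P + muP • (1 : 𝒜) :=
  stmt_14_general hdim 𝒜 h𝒜 Φ hsurj hpres P hP hP0 hP1
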